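/- Let m ≥ 1 be an integer. There exists a constant C > 0, depending only on m, such that for all reals X ≥ 2 one has ∑_{n ≤ X} τ_m(n)² ≤ C · X · (log X)^{m² − 1}. -/

import Mathlib

/-!
Each `m`-fold factorisation `d` of `n` refines to `∏ᵢ τ_m(dᵢ)` factorisations of `n` indexed by
`Fin m × Fin m`, and `τ_m` is submultiplicative, so `τ_m(n) = τ_m(∏ᵢ dᵢ) ≤ ∏ᵢ τ_m(dᵢ)`; summing
over the `τ_m(n)` choices of `d` gives `τ_m(n)² ≤ τ_{m²}(n)`. Hence the sum is at most the number
of `m²`-tuples of positive integers with product at most `N = ⌊X⌋`. Fixing the first coordinate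
`j` of a `(k+1)`-tuple leaves a `k`-tuple with product at most `N / j`, so by induction and
`∑_{j ≤ N} 1/j ≤ 1 + log N` this number is at most `N (1 + log N)^(m² - 1)`. Finally
`1 + log X ≤ (1 + 1/log 2) log X` for `X ≥ 2`.
-/

noncomputable section

open scoped BigOperators

/-- The generalized divisor function `τ_m(n)`, the number of ways of writing `n`
as an ordered product of `m` positive integers. -/
def tauGen (m n : ℕ) : ℕ :=
  ((Fintype.piFinset fun _ : Fin m => Finset.Icc 1 n).filter
    (fun d : Fin m → ℕ => ∏ i, d i = n)).card

open Finset

def piMulAntidiag (ι : Type*) [Fintype ι] [DecidableEq ι] (n : ℕ) : Finset (ι → ℕ) :=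
  {d ∈ Fintype.piFinset fun _ : ι => Icc 1 n | ∏ i, d i = n}

def piMulAntidiagUpTo (ι : Type*) [Fintype ι] [DecidableEq ι] (N : ℕ) : Finset (ι → ℕ) :=
  (Icc 1 N).biUnion (piMulAntidiag ι)

theorem tauGen_eq_card (m n : ℕ) : tauGen m n = #(piMulAntidiag (Fin m) n) := rfl

theorem exists_mul_eq_of_prod_eq_mul {ι : Type*} [DecidableEq ι] (s : Finset ι) (d : ι → ℕ) :
    ∀ {a b : ℕ}, a * b ≠ 0 → ∏ i ∈ s, d i = a * b →
      ∃ u v : ι → ℕ, ∏ i ∈ s, u i = a ∧ ∏ i ∈ s, v i = b ∧ ∀ i ∈ s, u i * v i = d i := by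
  induction s using Finset.induction_on with
  | empty =>
    intro a b _ h
    obtain ⟨rfl, rfl⟩ := mul_eq_one.mp h.symm
    exact ⟨1, 1, by simp, by simp, by simp⟩
  | insert j s hj ih =>
    intro a b hab h
    rw [prod_insert hj] at h
    obtain ⟨a₁, b₁, ⟨a₂, rfl⟩, ⟨b₂, rfl⟩, hd⟩ := Nat.dvd_mul.mp (Dvd.intro _ h)
    obtain ⟨⟨ha₁, ha₂⟩, hb₁, hb₂⟩ : (a₁ ≠ 0 ∧ a₂ ≠ 0) ∧ b₁ ≠ 0 ∧ b₂ ≠ 0 := by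
      simpa only [mul_ne_zero_iff] using hab
    have hrest : ∏ i ∈ s, d i = a₂ * b₂ := by
      refine Nat.eq_of_mul_eq_mul_left (Nat.pos_of_ne_zero (mul_ne_zero ha₁ hb₁)) ?_
      rw [hd, h, ← hd]; ring
    obtain ⟨u, v, hu, hv, huv⟩ := ih (mul_ne_zero ha₂ hb₂) hrest
    refine ⟨Function.update u j a₁, Function.update v j b₁, ?_, ?_, ?_⟩
    · rw [prod_insert hj, Function.update_self, prod_update_of_notMem hj, hu]
    · rw [prod_insert hj, Function.update_self, prod_update_of_notMem hj, hv]
    · intro i hi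
      rcases eq_or_ne i j with rfl | hij
      · simp [hd]
      · simp [hij, huv i ((mem_insert.mp hi).resolve_left hij)]

variable {ι : Type*} [Fintype ι] [DecidableEq ι]

@[simp]
theorem mem_piMulAntidiag {n : ℕ} {d : ι → ℕ} :
    d ∈ piMulAntidiag ι n ↔ ∏ i, d i = n ∧ n ≠ 0 := by
  simp only [piMulAntidiag, mem_filter, Fintype.mem_piFinset, mem_Icc]
  constructor
  · rintro ⟨hd, rfl⟩
    exact ⟨rfl, prod_ne_zero_iff.mpr fun i _ => by grind⟩
  · rintro ⟨rfl, hn⟩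
    refine ⟨fun i => ?_, rfl⟩
    have hdvd : d i ∣ ∏ j, d j := dvd_prod_of_mem d (mem_univ i)
    exact ⟨Nat.pos_of_ne_zero (ne_zero_of_dvd_ne_zero hn hdvd), Nat.le_of_dvd (by omega) hdvd⟩

@[simp]
theorem piMulAntidiag_zero : piMulAntidiag ι 0 = ∅ := by
  ext; simp

theorem piMulAntidiag_one : piMulAntidiag ι 1 = {1} := by
  ext d
  simp [funext_iff]

theorem card_piMulAntidiag_congr {κ : Type*} [Fintype κ] [DecidableEq κ] (e : ι ≃ κ) (n : ℕ) :
    #(piMulAntidiag ι n) = #(piMulAntidiag κ n) := by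
  refine card_nbij' (· ∘ e.symm) (· ∘ e) (fun d hd => ?_) (fun d hd => ?_)
    (fun d _ => by simp [Function.comp_def]) (fun d _ => by simp [Function.comp_def])
  · simpa [e.symm.prod_comp d] using hd
  · simpa [e.prod_comp d] using hd

theorem card_piMulAntidiag_mul_le (a b : ℕ) :
    #(piMulAntidiag ι (a * b)) ≤ #(piMulAntidiag ι a) * #(piMulAntidiag ι b) := by
  rcases eq_or_ne (a * b) 0 with hab | hab
  · simp [hab]
  rw [← card_product]
  refine card_le_card_of_surjOn (fun p => p.1 * p.2) fun d hd => ?_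
  obtain ⟨hd, -⟩ := mem_piMulAntidiag.mp hd
  obtain ⟨u, v, hu, hv, huv⟩ := exists_mul_eq_of_prod_eq_mul univ d hab hd
  obtain ⟨ha, hb⟩ := mul_ne_zero_iff.mp hab
  exact ⟨(u, v), by simp [hu, hv, ha, hb], funext fun i => huv i (mem_univ i)⟩

theorem card_piMulAntidiag_prod_le {κ : Type*} (s : Finset κ) (f : κ → ℕ) :
    #(piMulAntidiag ι (∏ j ∈ s, f j)) ≤ ∏ j ∈ s, #(piMulAntidiag ι (f j)) :=
  le_prod_of_submultiplicative (fun n => #(piMulAntidiag ι n))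
    (by simp [piMulAntidiag_one]) card_piMulAntidiag_mul_le s f

theorem card_piMulAntidiag_prod_eq_sum {κ : Type*} [Fintype κ] [DecidableEq κ] (n : ℕ) :
    #(piMulAntidiag (ι × κ) n) =
      ∑ d ∈ piMulAntidiag ι n, ∏ i, #(piMulAntidiag κ (d i)) := by
  have hmaps : ∀ g ∈ piMulAntidiag (ι × κ) n,
      (fun i => ∏ j, g (i, j)) ∈ piMulAntidiag ι n := by
    intro g hg
    simpa [← Fintype.prod_prod_type'] using hg
  rw [card_eq_sum_card_fiberwise hmaps]
  refine sum_congr rfl fun d hd => ?_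
  have hd0 : ∀ i, d i ≠ 0 := by
    obtain ⟨rfl, hn⟩ := mem_piMulAntidiag.mp hd
    exact fun i => prod_ne_zero_iff.mp hn i (mem_univ i)
  rw [← Fintype.card_piFinset]
  refine card_nbij' Function.curry Function.uncurry (fun g hg => ?_) (fun g hg => ?_)
    (fun _ _ => rfl) (fun _ _ => rfl)
  · simp only [coe_filter, Set.mem_ofPred_eq, mem_piMulAntidiag] at hg
    simp only [mem_coe, Fintype.mem_piFinset, mem_piMulAntidiag]
    exact fun i => ⟨congrFun hg.2 i, hd0 i⟩
  · simp only [mem_coe, Fintype.mem_piFinset, mem_piMulAntidiag] at hg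
    have hrows : (fun i => ∏ j, Function.uncurry g (i, j)) = d := funext fun i => (hg i).1
    simp only [coe_filter, Set.mem_ofPred_eq, mem_piMulAntidiag, Fintype.prod_prod_type, hrows]
    exact ⟨mem_piMulAntidiag.mp hd, trivial⟩

theorem card_piMulAntidiag_sq_le (n : ℕ) :
    #(piMulAntidiag ι n) ^ 2 ≤ #(piMulAntidiag (ι × ι) n) := by
  rw [card_piMulAntidiag_prod_eq_sum, sq, ← smul_eq_mul, ← sum_const]
  refine sum_le_sum fun d hd => ?_
  rw [← (mem_piMulAntidiag.mp hd).1]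
  exact card_piMulAntidiag_prod_le univ d

@[simp]
theorem mem_piMulAntidiagUpTo {N : ℕ} {d : ι → ℕ} :
    d ∈ piMulAntidiagUpTo ι N ↔ ∏ i, d i ≠ 0 ∧ ∏ i, d i ≤ N := by
  simp only [piMulAntidiagUpTo, mem_biUnion, mem_Icc, mem_piMulAntidiag]
  constructor
  · rintro ⟨n, ⟨-, hn⟩, rfl, h0⟩
    exact ⟨h0, hn⟩
  · rintro ⟨h0, hN⟩
    exact ⟨_, ⟨Nat.one_le_iff_ne_zero.mpr h0, hN⟩, rfl, h0⟩

theorem card_piMulAntidiagUpTo (N : ℕ) :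
    #(piMulAntidiagUpTo ι N) = ∑ n ∈ Icc 1 N, #(piMulAntidiag ι n) := by
  refine card_biUnion fun a _ b _ hab => disjoint_left.mpr fun d hda hdb => hab ?_
  rw [← (mem_piMulAntidiag.mp hda).1, (mem_piMulAntidiag.mp hdb).1]

theorem card_piMulAntidiagUpTo_fin_succ (k N : ℕ) :
    #(piMulAntidiagUpTo (Fin (k + 1)) N) =
      ∑ j ∈ Icc 1 N, #(piMulAntidiagUpTo (Fin k) (N / j)) := by
  have hmaps : ∀ d ∈ piMulAntidiagUpTo (Fin (k + 1)) N, d 0 ∈ Icc 1 N := by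
    intro d hd
    obtain ⟨h0, hN⟩ := mem_piMulAntidiagUpTo.mp hd
    have hdvd : d 0 ∣ ∏ i, d i := dvd_prod_of_mem d (mem_univ 0)
    exact mem_Icc.mpr ⟨Nat.pos_of_ne_zero (ne_zero_of_dvd_ne_zero h0 hdvd),
      (Nat.le_of_dvd (Nat.pos_of_ne_zero h0) hdvd).trans hN⟩
  rw [card_eq_sum_card_fiberwise hmaps]
  refine sum_congr rfl fun j hj => ?_
  have hj : 0 < j := (mem_Icc.mp hj).1
  refine card_nbij' Fin.tail (fun t => Fin.cons j t) (fun d hd => ?_) (fun t ht => ?_)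
    (fun d hd => ?_) (fun t _ => Fin.tail_cons _ _)
  · simp only [coe_filter, Set.mem_ofPred_eq, mem_piMulAntidiagUpTo, Fin.prod_univ_succ] at hd
    obtain ⟨⟨h0, hN⟩, rfl⟩ := hd
    simp only [mem_coe, mem_piMulAntidiagUpTo, Fin.tail, Nat.le_div_iff_mul_le hj]
    exact ⟨right_ne_zero_of_mul h0, by linarith⟩
  · simp only [mem_coe, mem_piMulAntidiagUpTo, Nat.le_div_iff_mul_le hj] at ht
    simp only [coe_filter, Set.mem_ofPred_eq, mem_piMulAntidiagUpTo, Fin.prod_univ_succ,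
      Fin.cons_zero, Fin.cons_succ]
    exact ⟨⟨mul_ne_zero hj.ne' ht.1, by linarith⟩, trivial⟩
  · obtain ⟨-, rfl⟩ := mem_filter.mp hd
    exact Fin.cons_self_tail d

theorem sum_Icc_inv_le_one_add_log (N : ℕ) :
    ∑ j ∈ Icc 1 N, (j : ℝ)⁻¹ ≤ 1 + Real.log N := by
  simpa [harmonic_eq_sum_Icc] using harmonic_le_one_add_log N

theorem card_piMulAntidiagUpTo_fin_le (k N : ℕ) :
    (#(piMulAntidiagUpTo (Fin (k + 1)) N) : ℝ) ≤ N * (1 + Real.log N) ^ k := by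
  induction k generalizing N with
  | zero =>
    have h : #(piMulAntidiagUpTo (Fin 1) N) ≤ N := by
      rw [card_piMulAntidiagUpTo_fin_succ]
      simpa using sum_le_card_nsmul (Icc 1 N) _ 1 fun j _ => card_le_one_of_subsingleton _
    simpa using h
  | succ k ih =>
    have hlog : ∀ M ≤ N, Real.log M ≤ Real.log N := by
      intro M hM
      rcases M.eq_zero_or_pos with rfl | hM0
      · simpa using Real.log_natCast_nonneg N
      · exact Real.log_le_log (by positivity) (by exact_mod_cast hM)
    rw [card_piMulAntidiagUpTo_fin_succ]
    push_cast
    calc ∑ j ∈ Icc 1 N, (#(piMulAntidiagUpTo (Fin (k + 1)) (N / j)) : ℝ)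
        ≤ ∑ j ∈ Icc 1 N, (N / j : ℝ) * (1 + Real.log N) ^ k := by
          refine sum_le_sum fun j _ => (ih (N / j)).trans ?_
          gcongr ?_ * (1 + ?_) ^ k
          · exact Nat.cast_div_le
          · exact hlog _ (Nat.div_le_self N j)
      _ = N * (1 + Real.log N) ^ k * ∑ j ∈ Icc 1 N, (j : ℝ)⁻¹ := by
          rw [mul_sum]
          exact sum_congr rfl fun j _ => by ring
      _ ≤ N * (1 + Real.log N) ^ (k + 1) := by
          rw [pow_succ, ← mul_assoc]
          gcongr
          exact sum_Icc_inv_le_one_add_log N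

theorem tauGen_sq_le (m n : ℕ) : tauGen m n ^ 2 ≤ tauGen (m * m) n := by
  rw [tauGen_eq_card, tauGen_eq_card, ← card_piMulAntidiag_congr finProdFinEquiv]
  exact card_piMulAntidiag_sq_le n

theorem sum_tauGen_sq_le_card (m N : ℕ) :
    ∑ n ∈ Icc 1 N, tauGen m n ^ 2 ≤ #(piMulAntidiagUpTo (Fin (m * m)) N) := by
  rw [card_piMulAntidiagUpTo]
  exact sum_le_sum fun n _ => tauGen_sq_le m n

theorem one_add_log_le_mul_log {X : ℝ} (hX : 2 ≤ X) :
    1 + Real.log X ≤ (1 + (Real.log 2)⁻¹) * Real.log X := by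
  have h : 1 ≤ (Real.log 2)⁻¹ * Real.log X := by
    rw [inv_mul_eq_div, one_le_div (Real.log_pos one_lt_two)]
    exact Real.log_le_log two_pos hX
  linarith

theorem tauGen_sq_sum_bound (m : ℕ) (hm : 1 ≤ m) :
    ∃ C : ℝ, 0 < C ∧ ∀ X : ℝ, 2 ≤ X →
      ∑ n ∈ Finset.Icc 1 ⌊X⌋₊, (tauGen m n : ℝ) ^ 2 ≤
        C * X * (Real.log X) ^ ((m : ℝ) ^ 2 - 1) := by
  obtain ⟨k, hk⟩ := Nat.exists_eq_add_one.mpr (Nat.mul_pos hm hm)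
  have hexp : (m : ℝ) ^ 2 - 1 = k := by
    rw [sq, ← Nat.cast_mul, hk]
    push_cast
    ring
  refine ⟨(1 + (Real.log 2)⁻¹) ^ k, by positivity, fun X hX => ?_⟩
  have hN : (⌊X⌋₊ : ℝ) ≤ X := Nat.floor_le (by linarith)
  have hN0 : (0 : ℝ) < ⌊X⌋₊ := by
    exact_mod_cast Nat.floor_pos.mpr (by linarith)
  calc ∑ n ∈ Icc 1 ⌊X⌋₊, (tauGen m n : ℝ) ^ 2
      ≤ #(piMulAntidiagUpTo (Fin (k + 1)) ⌊X⌋₊) := by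
        rw [← hk]
        exact_mod_cast sum_tauGen_sq_le_card m ⌊X⌋₊
    _ ≤ ⌊X⌋₊ * (1 + Real.log ⌊X⌋₊) ^ k := card_piMulAntidiagUpTo_fin_le k ⌊X⌋₊
    _ ≤ X * (1 + Real.log X) ^ k := by gcongr
    _ ≤ X * ((1 + (Real.log 2)⁻¹) * Real.log X) ^ k := by
        have hlogX : 0 ≤ Real.log X := Real.log_nonneg (by linarith)
        gcongr
        exact one_add_log_le_mul_log hX
    _ = (1 + (Real.log 2)⁻¹) ^ k * X * Real.log X ^ ((m : ℝ) ^ 2 - 1) := by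
        rw [hexp, Real.rpow_natCast, mul_pow]
        ring
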